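/- Let D ≥ 2 be a squarefree integer and K = ℚ(√D) with ring of integers ℤ_K. Then ℤ_K contains a unit of norm −1 (i.e., an element u of ℤ_Kˣ with N(u) = −1) if and only if there exist positive integers n and f such that n² + 4 = f²·D (i.e., D is the squarefree part of n² + 4 for some integer n). -/

import Mathlib

open NumberField

lemma helper_den_one (D : ℕ) (hD : Squarefree D) (q : ℚ) (m : ℤ)
    (h : (D : ℚ) * q ^ 2 = (m : ℚ)) : ∃ s : ℤ, (s : ℚ) = q := by
  have hd : (q.den : ℚ) ≠ 0 := by exact_mod_cast q.den_ne_zero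
  have hq : (q.num : ℚ) / (q.den : ℚ) = q := Rat.num_div_den q
  have h2 : (D : ℚ) * (q.num : ℚ) ^ 2 = (m : ℚ) * (q.den : ℚ) ^ 2 := by
    rw [← hq] at h
    field_simp at h
    linarith [h]
  have h3 : (D : ℤ) * q.num ^ 2 = m * (q.den : ℤ) ^ 2 := by exact_mod_cast h2
  have hdvd : ((q.den : ℤ)) ^ 2 ∣ (D : ℤ) * q.num ^ 2 := ⟨m, by linarith [h3]⟩
  have hcop : IsCoprime (q.num) ((q.den : ℤ)) := by
    rw [Int.isCoprime_iff_gcd_eq_one]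
    exact_mod_cast q.reduced
  have hcop2 : IsCoprime ((q.den : ℤ) ^ 2) (q.num ^ 2) := (hcop.symm.pow)
  have hdvdD : ((q.den : ℤ)) ^ 2 ∣ (D : ℤ) := hcop2.dvd_of_dvd_mul_right hdvd
  have hsf : Squarefree (D : ℤ) := Int.squarefree_natCast.mpr hD
  have : IsUnit ((q.den : ℤ)) := hsf _ (by rwa [← sq])
  have hden : q.den = 1 := by
    rcases Int.isUnit_iff.mp this with h' | h' <;> omega
  exact ⟨q.num, by rw [← hq, hden]; simp⟩

/-- Let `D ≥ 2` be a squarefree integer and `K = ℚ(√D)` with ring of integers `ℤ_K`.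
Then `ℤ_K` contains a unit of norm `−1` if and only if there exist positive integers
`n` and `f` such that `n² + 4 = f²·D`. -/
theorem stmt_0 (D : ℕ) (hD : Squarefree D) (hD2 : 2 ≤ D)
    (K : Type*) [Field K] [NumberField K]
    (hdeg : Module.finrank ℚ K = 2)
    (sqrtD : K) (hsq : sqrtD ^ 2 = (D : K)) :
    (∃ u : (𝓞 K)ˣ, Algebra.norm ℚ ((u : 𝓞 K) : K) = -1) ↔
      ∃ n f : ℕ, 0 < n ∧ 0 < f ∧ n ^ 2 + 4 = f ^ 2 * D := by
  -- sqrtD is irrational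
  have hirr : ∀ q : ℚ, (q : K) ≠ sqrtD := by
    intro q hq
    have h1 : ((q ^ 2 : ℚ) : K) = ((D : ℚ) : K) := by push_cast; rw [hq]; exact hsq
    have h2 : q ^ 2 = (D : ℚ) := Rat.cast_injective h1
    obtain ⟨s, hs⟩ := helper_den_one 1 squarefree_one q (D : ℤ)
      (by push_cast; rw [h2]; ring)
    have hs2 : s ^ 2 = (D : ℤ) := by
      have : ((s : ℚ)) ^ 2 = (D : ℚ) := by rw [hs]; exact h2
      exact_mod_cast this
    have hsf : Squarefree (D : ℤ) := Int.squarefree_natCast.mpr hD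
    have : IsUnit s := hsf s (by rw [← sq, hs2])
    rcases Int.isUnit_iff.mp this with h' | h' <;> (rw [h'] at hs2; omega)
  have hli : LinearIndependent ℚ ![(1 : K), sqrtD] := by
    rw [LinearIndependent.pair_iff]
    intro s t hst
    have hst' : (s : K) + (t : K) * sqrtD = 0 := by
      rw [Rat.smul_def, Rat.smul_def] at hst
      simpa using hst
    by_cases ht : t = 0
    · subst ht
      push_cast at hst'
      simp only [mul_zero, zero_mul, add_zero] at hst'
      constructor
      · exact_mod_cast hst'
      · rfl
    · exfalso
      apply hirr (-s / t)
      have htK : (t : K) ≠ 0 := by exact_mod_cast ht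
      push_cast
      field_simp
      linear_combination -hst'
  have hcard : Fintype.card (Fin 2) = Module.finrank ℚ K := by simp [hdeg]
  let b : Module.Basis (Fin 2) ℚ K := basisOfLinearIndependentOfCardEqFinrank hli hcard
  have hb : ⇑b = ![(1 : K), sqrtD] := coe_basisOfLinearIndependentOfCardEqFinrank hli hcard
  have hb0 : b 0 = 1 := by rw [hb]; rfl
  have hb1 : b 1 = sqrtD := by rw [hb]; rfl
  have hrepr : ∀ x y : ℚ, b.repr (x • (1 : K) + y • sqrtD)
      = Finsupp.single 0 x + Finsupp.single 1 y := by
    intro x y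
    rw [← hb0, ← hb1]
    simp [Finsupp.smul_single]
  have hmat' : ∀ x y : ℚ, Algebra.leftMulMatrix b (x • (1 : K) + y • sqrtD)
      = !![x, y * D; y, x] := by
    intro x y
    have hm0 : (x • (1 : K) + y • sqrtD) * b 0 = x • (1 : K) + y • sqrtD := by
      rw [hb0, mul_one]
    have hm1 : (x • (1 : K) + y • sqrtD) * b 1 = (y * (D : ℚ)) • (1 : K) + x • sqrtD := by
      rw [hb1]
      simp only [Rat.smul_def]
      push_cast
      linear_combination (y : K) * hsq
    ext i j
    rw [Algebra.leftMulMatrix_eq_repr_mul]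
    fin_cases j
    · show b.repr ((x • (1 : K) + y • sqrtD) * b 0) i = !![x, y * D; y, x] i 0
      rw [hm0, hrepr]
      fin_cases i <;> simp
    · show b.repr ((x • (1 : K) + y • sqrtD) * b 1) i = !![x, y * D; y, x] i 1
      rw [hm1, hrepr]
      fin_cases i <;> simp
  have hnormf : ∀ x y : ℚ, Algebra.norm ℚ (x • (1 : K) + y • sqrtD) = x ^ 2 - D * y ^ 2 := by
    intro x y
    rw [Algebra.norm_eq_matrix_det b, hmat', Matrix.det_fin_two_of]
    ring
  have htracef : ∀ x y : ℚ, Algebra.trace ℚ K (x • (1 : K) + y • sqrtD) = 2 * x := by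
    intro x y
    rw [Algebra.trace_eq_matrix_trace b, hmat', Matrix.trace_fin_two_of]
    ring
  constructor
  · rintro ⟨u, hu⟩
    set z : K := ((u : 𝓞 K) : K) with hz
    have hdec : z = (b.repr z 0) • (1 : K) + (b.repr z 1) • sqrtD := by
      conv_lhs => rw [← b.sum_repr z]
      rw [Fin.sum_univ_two, hb0, hb1]
    set x := b.repr z 0 with hx
    set y := b.repr z 1 with hy
    have hnorm : x ^ 2 - D * y ^ 2 = -1 := by rw [← hnormf x y, ← hdec]; exact hu
    have hzint : IsIntegral ℤ z := RingOfIntegers.isIntegral_coe (u : 𝓞 K)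
    have htrint : IsIntegral ℤ (Algebra.trace ℚ K z) := Algebra.isIntegral_trace hzint
    obtain ⟨a, ha⟩ := IsIntegrallyClosed.isIntegral_iff.mp htrint
    have ha' : (a : ℚ) = Algebra.trace ℚ K z := by rw [← ha]; simp
    have ha2 : (a : ℚ) = 2 * x := by rw [ha', hdec, htracef]
    have hDt : (D : ℚ) * (2 * y) ^ 2 = ((a ^ 2 + 4 : ℤ) : ℚ) := by
      push_cast
      rw [ha2]
      linear_combination (-4 : ℚ) * hnorm
    obtain ⟨s, hs⟩ := helper_den_one D hD (2 * y) _ hDt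
    have hint : (D : ℤ) * s ^ 2 = a ^ 2 + 4 := by
      have : (D : ℚ) * ((s : ℚ)) ^ 2 = ((a ^ 2 + 4 : ℤ) : ℚ) := by rw [hs]; exact hDt
      exact_mod_cast this
    have hs0 : s ≠ 0 := by
      intro h; rw [h] at hint; simp at hint; nlinarith [sq_nonneg a]
    have ha0 : a ≠ 0 := by
      intro h
      rw [h] at hint
      norm_num at hint
      -- hint : (D:ℤ) * s^2 = 4
      have hDz : (2 : ℤ) ≤ (D : ℤ) := by exact_mod_cast hD2
      rcases lt_or_ge (|s|) 2 with h2 | h2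
      · have habs : |s| = 1 := by
          have := Int.one_le_abs hs0
          omega
        have hs2 : s ^ 2 = 1 := by rw [← sq_abs, habs]; norm_num
        rw [hs2, mul_one] at hint
        have hD4 : D = 4 := by exact_mod_cast hint
        have := hD 2 (by rw [hD4]; norm_num)
        rw [Nat.isUnit_iff] at this
        omega
      · have h4 : 4 ≤ s ^ 2 := by nlinarith [sq_abs s]
        nlinarith [hint]
    refine ⟨a.natAbs, s.natAbs, Int.natAbs_pos.mpr ha0, Int.natAbs_pos.mpr hs0, ?_⟩
    have hfin : ((a.natAbs : ℤ)) ^ 2 + 4 = ((s.natAbs : ℤ)) ^ 2 * D := by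
      rw [← Int.abs_eq_natAbs, sq_abs, ← Int.abs_eq_natAbs, sq_abs]
      linarith [hint]
    exact_mod_cast hfin
  · rintro ⟨n, f, hn, hf, heq⟩
    have hDfQ : (n : ℚ) ^ 2 + 4 = (f : ℚ) ^ 2 * D := by exact_mod_cast heq
    have hDfK : (n : K) ^ 2 + 4 = (f : K) ^ 2 * D := by exact_mod_cast heq
    set α : K := ((n : ℚ) / 2) • (1 : K) + ((f : ℚ) / 2) • sqrtD with hα
    have hαK : α = ((n : K) + (f : K) * sqrtD) / 2 := by
      rw [hα, Rat.smul_def, Rat.smul_def]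
      push_cast
      ring
    have hpoly : α ^ 2 = (n : K) * α + 1 := by
      rw [hαK]
      linear_combination ((f : K) ^ 2 / 4) * hsq - (1 / 4 : K) * hDfK
    have hint : IsIntegral ℤ α := by
      refine ⟨Polynomial.X ^ 2 - Polynomial.C (n : ℤ) * Polynomial.X - 1, ?_, ?_⟩
      · have h1 : (Polynomial.X ^ 2 - Polynomial.C (n : ℤ) * Polynomial.X - 1 : Polynomial ℤ)
            = Polynomial.X ^ 2 - (Polynomial.C (n : ℤ) * Polynomial.X + 1) := by ring
        rw [h1]
        apply Polynomial.monic_X_pow_sub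
        apply lt_of_le_of_lt (Polynomial.degree_add_le _ _)
        apply max_lt
        · exact lt_of_le_of_lt (Polynomial.degree_C_mul_X_le _) (by decide)
        · exact lt_of_le_of_lt Polynomial.degree_one_le (by decide)
      · simp only [Polynomial.eval₂_sub, Polynomial.eval₂_pow, Polynomial.eval₂_X,
          Polynomial.eval₂_mul, Polynomial.eval₂_C, Polynomial.eval₂_one]
        push_cast
        linear_combination hpoly
    have hintn : IsIntegral ℤ ((n : K)) := by
      have h := RingOfIntegers.isIntegral_coe (n : 𝓞 K)
      rwa [map_natCast] at h
    let U : 𝓞 K := ⟨α, hint⟩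
    let V : 𝓞 K := ⟨α - n, hint.sub hintn⟩
    have hUV : U * V = 1 := by
      ext
      show α * (α - n) = 1
      linear_combination hpoly
    refine ⟨⟨U, V, hUV, by rw [mul_comm]; exact hUV⟩, ?_⟩
    show Algebra.norm ℚ α = -1
    rw [hα, hnormf]
    have h2 : (4 : ℚ) * ((n / 2 : ℚ) ^ 2 - (D : ℚ) * (f / 2 : ℚ) ^ 2) = -4 := by
      field_simp
      linarith [hDfQ]
    linarith [h2]
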